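/- Let β : B → ℝ be defined on the bonds of the triangular lattice with β ∈ ℓ²(B), and suppose that for each integer radius ρ with K ≤ ρ ≤ L/2, the sum of β over the bonds crossing (or lying on) a lattice circuit γ_ρ of radius ρ around the origin satisfies |Σ_{b∈γ_ρ} β_b| ≥ 1, while the number of bonds in γ_ρ is at most Cρ. Then ‖β‖_{ℓ²}² ≥ c log(L/(2K)) for constants c, C depending only on the lattice. -/

import Mathlib

noncomputable section
open Real

abbrev E2 := EuclideanSpace ℝ (Fin 2)

def la1 : E2 := WithLp.toLp 2 (![1, 0] : Fin 2 → ℝ)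
def la2 : E2 := WithLp.toLp 2 (![1/2, Real.sqrt 3 / 2] : Fin 2 → ℝ)

def TriLat : Set E2 :=
  {x | ∃ m n : ℤ, x = (3 : ℝ)⁻¹ • (la1 + la2) + m • la1 + n • la2}

def Bonds : Set (E2 × E2) :=
  {p | p.1 ∈ TriLat ∧ p.2 ∈ TriLat ∧ ‖p.2 - p.1‖ = 1}

/-! By Cauchy–Schwarz, a circuit `γ_ρ` with `|∑ β| ≥ 1` and at most `Cρ` bonds carries
`∑_{γ_ρ} β² ≥ 1/(Cρ)`. The circuits are disjoint, so the `ℓ²` mass is at least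
`C⁻¹ ∑_{K ≤ ρ ≤ L/2} 1/ρ`, and the harmonic sum dominates `log ((⌊L/2⌋ + 1)/K) ≥ log (L/(2K))`
by `log (ρ + 1) - log ρ ≤ 1/ρ`. -/

open Finset

theorem inv_le_sum_sq_of_one_le_abs_sum {ι : Type*} {s : Finset ι} {f : ι → ℝ} {a : ℝ}
    (hsum : 1 ≤ |∑ i ∈ s, f i|) (hcard : (#s : ℝ) ≤ a) : a⁻¹ ≤ ∑ i ∈ s, f i ^ 2 := by
  have hsq : 0 ≤ ∑ i ∈ s, f i ^ 2 := sum_nonneg fun i _ => sq_nonneg (f i)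
  have h : 1 ≤ a * ∑ i ∈ s, f i ^ 2 :=
    calc 1 ≤ |∑ i ∈ s, f i| ^ 2 := one_le_pow₀ hsum
      _ = (∑ i ∈ s, f i) ^ 2 := sq_abs _
      _ ≤ #s * ∑ i ∈ s, f i ^ 2 := sq_sum_le_card_mul_sum_sq
      _ ≤ a * ∑ i ∈ s, f i ^ 2 := mul_le_mul_of_nonneg_right hcard hsq
  have ha : 0 < a := pos_of_mul_pos_left (one_pos.trans_le h) hsq
  exact (inv_le_iff_one_le_mul₀' ha).2 h

theorem log_add_one_sub_log_le_inv {x : ℝ} (hx : 0 < x) : log (x + 1) - log x ≤ x⁻¹ := by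
  rw [← log_div (by positivity) hx.ne']
  calc log ((x + 1) / x) ≤ (x + 1) / x - 1 := log_le_sub_one_of_pos (by positivity)
    _ = x⁻¹ := by field_simp; ring

theorem log_div_le_sum_Icc_inv {m n : ℕ} (hm : 0 < m) (hmn : m ≤ n) :
    log ((n + 1) / m) ≤ ∑ k ∈ Icc m n, (k : ℝ)⁻¹ := by
  rw [log_div (by positivity) (by positivity)]
  calc log (n + 1) - log m = ∑ k ∈ Icc m n, (log ((k : ℝ) + 1) - log k) := by
        simpa only [Nat.cast_add_one] using (sum_Icc_sub hmn fun k => log (k : ℝ)).symm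
    _ ≤ ∑ k ∈ Icc m n, (k : ℝ)⁻¹ := sum_le_sum fun k hk =>
        log_add_one_sub_log_le_inv (Nat.cast_pos.2 (hm.trans_le (mem_Icc.1 hk).1))

theorem sum_le_tsum_subtype {α : Type*} {s : Set α} {f : α → ℝ} (t : Finset α) (hts : ↑t ⊆ s)
    (hf : ∀ x : s, 0 ≤ f x) (hsum : Summable fun x : s => f x) :
    ∑ x ∈ t, f x ≤ ∑' x : s, f x := by
  classical
  calc ∑ x ∈ t, f x = ∑ x ∈ t.subtype (· ∈ s), f x := (sum_subtype_of_mem f hts).symm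
    _ ≤ ∑' x : s, f x := hsum.sum_le_tsum _ fun x _ => hf x

/-- Logarithmic lower bound forced by a unit circulation: if β has circulation ≥ 1 on
disjoint lattice circuits γ_ρ of radius ρ, K ≤ ρ ≤ L/2, each using at most Cρ bonds,
then ‖β‖²_{ℓ²} ≥ c log(L/(2K)). -/
theorem stmt14 (C : ℝ) (hC : 0 < C) :
    ∃ c : ℝ, 0 < c ∧
      ∀ (β : E2 × E2 → ℝ) (K L : ℕ) (γ : ℕ → Finset (E2 × E2)),
      1 ≤ K → 2 * K ≤ L →
      (∀ ρ σ : ℕ, ρ ≠ σ → Disjoint (γ ρ) (γ σ)) →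
      (∀ ρ : ℕ, (γ ρ : Set (E2 × E2)) ⊆ Bonds) →
      (∀ ρ : ℕ, K ≤ ρ → ρ ≤ L / 2 → 1 ≤ |∑ b ∈ γ ρ, β b|) →
      (∀ ρ : ℕ, K ≤ ρ → ρ ≤ L / 2 → ((γ ρ).card : ℝ) ≤ C * ρ) →
      Summable (fun b : Bonds => (β (b : E2 × E2)) ^ 2) →
      c * Real.log ((L : ℝ) / (2 * K)) ≤ ∑' b : Bonds, (β (b : E2 × E2)) ^ 2 := by
  refine ⟨C⁻¹, inv_pos.2 hC, fun β K L γ hK hL hdisj hbonds hcirc hcard hsum => ?_⟩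
  set M := L / 2
  have hKM : K ≤ M := by omega
  have hLM : (L : ℝ) / 2 ≤ M + 1 := by
    rw [div_le_iff₀ two_pos]
    exact_mod_cast (by omega : L ≤ (M + 1) * 2)
  have hLK : 0 < (L : ℝ) / (2 * K) := by
    have : 0 < L := by omega
    positivity
  calc C⁻¹ * log (L / (2 * K)) ≤ C⁻¹ * log ((M + 1) / K) := by
        gcongr C⁻¹ * log ?_
        rw [← div_div]
        gcongr
    _ ≤ C⁻¹ * ∑ ρ ∈ Icc K M, (ρ : ℝ)⁻¹ := by gcongr; exact log_div_le_sum_Icc_inv hK hKM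
    _ = ∑ ρ ∈ Icc K M, (C * ρ)⁻¹ := by simp only [mul_sum, mul_inv]
    _ ≤ ∑ ρ ∈ Icc K M, ∑ b ∈ γ ρ, β b ^ 2 := sum_le_sum fun ρ hρ => by
        obtain ⟨hKρ, hρM⟩ := mem_Icc.1 hρ
        exact inv_le_sum_sq_of_one_le_abs_sum (hcirc ρ hKρ hρM) (hcard ρ hKρ hρM)
    _ = ∑ b ∈ (Icc K M).biUnion γ, β b ^ 2 := (sum_biUnion fun ρ _ σ _ h => hdisj ρ σ h).symm
    _ ≤ ∑' b : Bonds, β b ^ 2 := by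
        refine sum_le_tsum_subtype _ ?_ (fun _ => sq_nonneg _) hsum
        simpa only [coe_biUnion, Set.iUnion_subset_iff] using fun ρ _ => hbonds ρ
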